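/- Let H, B be self-adjoint matrices with ‖H‖ ≤ 1 such that E_{S₁}(B) H E_{S₂}(B) = 0 whenever dist(S₁, S₂) ≥ Δ > 0. Fix S₁, S₂ with d = dist(S₁, S₂) > 0. Then for every real t with |t| ≤ d/(e²Δ), one has ‖E_{S₁}(B) e^{itH} E_{S₂}(B)‖ ≤ e^{-d/Δ} (a Lieb–Robinson-type bound). -/

import Mathlib

/-- The ℓ²→ℓ² operator norm of a square complex matrix. -/
noncomputable def opNorm {n : ℕ} (A : Matrix (Fin n) (Fin n) ℂ) : ℝ :=
  ‖Matrix.toEuclideanCLM (𝕜 := ℂ) A‖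

open Classical in
/-- The spectral projection of a Hermitian matrix `B` onto a set `S ⊆ ℝ`. -/
noncomputable def spectralProj {n : ℕ} {B : Matrix (Fin n) (Fin n) ℂ}
    (hB : B.IsHermitian) (S : Set ℝ) : Matrix (Fin n) (Fin n) ℂ :=
  (hB.eigenvectorUnitary : Matrix (Fin n) (Fin n) ℂ) *
    (Matrix.diagonal fun i => if hB.eigenvalues i ∈ S then (1 : ℂ) else 0) *
    star (hB.eigenvectorUnitary : Matrix (Fin n) (Fin n) ℂ)

/-!
Write `E_S` for `spectralProj hB S`. If `S₁, S₂` are at distance at least `c` and `T` is the set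
of points at distance at least `c - Δ` from `S₁`, then `1 = E_T + E_{Tᶜ}` splits
`E_{S₁} Hᵏ⁺¹ E_{S₂}` into `(E_{S₁} Hᵏ E_T) H E_{S₂}` and `E_{S₁} Hᵏ (E_{Tᶜ} H E_{S₂})`, where the
second factor vanishes by the finite-range hypothesis; by induction `E_{S₁} Hᵏ E_{S₂} = 0` as long
as `k Δ < c`. Hence only the terms with `k ≥ m = ⌈d/Δ⌉` of the exponential series survive. For
`|t| ≤ m/e²`, Stirling's bound `k! ≥ √(2πk) (k/e)ᵏ ≥ 2 (k/e)ᵏ` makes the `k`-th of them at most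
`e⁻ᵏ/2`, and these sum to at most `e⁻ᵐ`.
-/

open Real
open scoped Nat Matrix.Norms.L2Operator

theorem norm_mul_pow_mul_le {R : Type*} [SeminormedRing R] (a x b : R) (k : ℕ) :
    ‖a * x ^ k * b‖ ≤ ‖a‖ * ‖x‖ ^ k * ‖b‖ := by
  rcases k.eq_zero_or_pos with rfl | hk
  · simpa using norm_mul_le a b
  · calc ‖a * x ^ k * b‖ ≤ ‖a‖ * ‖x ^ k‖ * ‖b‖ := norm_mul₃_le
      _ ≤ ‖a‖ * ‖x‖ ^ k * ‖b‖ := by gcongr; exact norm_pow_le' x hk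

theorem norm_mul_exp_mul_le_of_mul_pow_mul_eq_zero (𝕂 : Type*) {𝔸 : Type*} [RCLike 𝕂]
    [NormedRing 𝔸] [NormedAlgebra 𝕂 𝔸] [CompleteSpace 𝔸] {a b x : 𝔸} {m : ℕ} {r : ℝ}
    (hx : ‖x‖ ≤ r) (hvanish : ∀ k < m, a * x ^ k * b = 0) :
    ‖a * NormedSpace.exp x * b‖ ≤ ‖a‖ * ‖b‖ * ∑' k, r ^ (k + m) / (k + m)! := by
  set f : ℕ → 𝔸 := fun k => (k !⁻¹ : 𝕂) • (a * x ^ k * b)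
  have hf : HasSum f (a * NormedSpace.exp x * b) := by
    simpa only [f, mul_smul_comm, smul_mul_assoc] using
      ((NormedSpace.exp_series_hasSum_exp' (𝕂 := 𝕂) x).mul_left a).mul_right b
  have htail : HasSum (fun k => f (k + m)) (a * NormedSpace.exp x * b) := by
    have hhead : ∑ k ∈ Finset.range m, f k = 0 :=
      Finset.sum_eq_zero fun k hk => by simp [f, hvanish k (Finset.mem_range.mp hk)]
    simpa only [hhead, sub_zero] using (hasSum_nat_add_iff' m).mpr hf
  have hbound : HasSum (fun k => ‖a‖ * ‖b‖ * (r ^ (k + m) / (k + m)!))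
      (‖a‖ * ‖b‖ * ∑' k, r ^ (k + m) / (k + m)!) :=
    ((summable_nat_add_iff m).mpr (Real.summable_pow_div_factorial r)).hasSum.mul_left _
  refine htail.norm_le_of_bounded hbound fun k => ?_
  have hr : 0 ≤ r := (norm_nonneg x).trans hx
  calc ‖f (k + m)‖ = ‖a * x ^ (k + m) * b‖ / (k + m)! := by
        simp [f, norm_smul, div_eq_inv_mul]
    _ ≤ ‖a‖ * r ^ (k + m) * ‖b‖ / (k + m)! := by
        gcongr; exact (norm_mul_pow_mul_le a x b _).trans (by gcongr)
    _ = ‖a‖ * ‖b‖ * (r ^ (k + m) / (k + m)!) := by ring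

theorem pow_div_factorial_le_exp_neg_div_two {r : ℝ} {k : ℕ} (hk : k ≠ 0) (hr : 0 ≤ r)
    (hrk : r * exp 2 ≤ k) : r ^ k / k ! ≤ exp (-k) / 2 := by
  have hk' : (1 : ℝ) ≤ k := by exact_mod_cast Nat.one_le_iff_ne_zero.mpr hk
  have hsqrt : 2 ≤ √(2 * π * k) := by
    rw [le_sqrt zero_le_two (by positivity)]
    nlinarith [pi_gt_three]
  have hfact : 2 * (k / exp 1) ^ k ≤ k ! :=
    le_trans (by gcongr) (Stirling.le_factorial_stirling k)
  have hpow : r ^ k ≤ exp (-k) * (k / exp 1) ^ k := by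
    calc r ^ k ≤ (k / exp 2) ^ k := by
          gcongr; rwa [le_div_iff₀ (exp_pos 2)]
      _ = (exp (-1) * (k / exp 1)) ^ k := by
          rw [exp_neg, show (2 : ℝ) = 1 + 1 by norm_num, exp_add]
          field_simp
      _ = exp (-k) * (k / exp 1) ^ k := by
          rw [mul_pow, ← exp_nat_mul]
          ring_nf
  rw [div_le_div_iff₀ (by positivity) two_pos]
  nlinarith [exp_pos (-k : ℝ)]

theorem tsum_pow_add_div_factorial_le_exp_neg {r : ℝ} {m : ℕ} (hm : m ≠ 0) (hr : 0 ≤ r)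
    (hrm : r * exp 2 ≤ m) : ∑' k, r ^ (k + m) / (k + m)! ≤ exp (-m) := by
  have hq : exp (-1) ≤ 1 / 2 := by
    rw [exp_neg, one_div]
    exact inv_anti₀ two_pos (by linarith [add_one_le_exp 1])
  have hgeom : HasSum (fun k : ℕ => exp (-m) / 2 * exp (-1) ^ k)
      (exp (-m) / 2 * (1 - exp (-1))⁻¹) :=
    (hasSum_geometric_of_lt_one (exp_pos _).le (by linarith)).mul_left _
  have hterm (k : ℕ) : r ^ (k + m) / (k + m)! ≤ exp (-m) / 2 * exp (-1) ^ k := by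
    have hkm : r * exp 2 ≤ (k + m : ℕ) := hrm.trans (by norm_cast; omega)
    calc r ^ (k + m) / (k + m)! ≤ exp (-(k + m : ℕ)) / 2 :=
          pow_div_factorial_le_exp_neg_div_two (by omega) hr hkm
      _ = exp (-m) / 2 * exp (-1) ^ k := by
          rw [← exp_nat_mul, div_mul_eq_mul_div, ← exp_add]; push_cast; ring_nf
  calc ∑' k, r ^ (k + m) / (k + m)! ≤ ∑' k : ℕ, exp (-m) / 2 * exp (-1) ^ k :=
        ((summable_nat_add_iff m).mpr (summable_pow_div_factorial r)).tsum_le_tsum hterm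
          hgeom.summable
    _ = exp (-m) / 2 * (1 - exp (-1))⁻¹ := hgeom.tsum_eq
    _ ≤ exp (-m) := by
        rw [div_mul_eq_mul_div, div_le_iff₀ two_pos, mul_le_mul_iff_right₀ (exp_pos _)]
        rw [inv_le_comm₀ (by linarith) two_pos]
        linarith

section SpectralProjection

variable {n : ℕ} {B : Matrix (Fin n) (Fin n) ℂ} (hB : B.IsHermitian)

theorem spectralProj_eq_cfc (S : Set ℝ) : spectralProj hB S = cfc (S.indicator 1) B := by
  rw [hB.cfc_eq, Matrix.IsHermitian.cfc, Unitary.conjStarAlgAut_apply, spectralProj]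
  congr 3
  ext i
  by_cases h : hB.eigenvalues i ∈ S <;> simp [h]

theorem spectralProj_mul_spectralProj (S T : Set ℝ) :
    spectralProj hB S * spectralProj hB T = spectralProj hB (S ∩ T) := by
  simp only [spectralProj_eq_cfc, Set.inter_indicator_one]
  exact (cfc_mul _ _ B (B.finite_real_spectrum.continuousOn _)
    (B.finite_real_spectrum.continuousOn _)).symm

theorem spectralProj_add_spectralProj_compl (S : Set ℝ) :
    spectralProj hB S + spectralProj hB Sᶜ = 1 := by
  simp only [spectralProj_eq_cfc]
  rw [← cfc_add (a := B) _ _ (B.finite_real_spectrum.continuousOn _)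
    (B.finite_real_spectrum.continuousOn _)]
  rw [show (fun x => S.indicator 1 x + Sᶜ.indicator 1 x) = (1 : ℝ → ℝ) from
    Set.indicator_self_add_compl S (1 : ℝ → ℝ)]
  exact cfc_one ℝ B hB.isSelfAdjoint

theorem spectralProj_empty : spectralProj hB ∅ = 0 := by
  simp [spectralProj_eq_cfc]

theorem isStarProjection_spectralProj (S : Set ℝ) : IsStarProjection (spectralProj hB S) where
  isIdempotentElem := by rw [IsIdempotentElem, spectralProj_mul_spectralProj, Set.inter_self]
  isSelfAdjoint := spectralProj_eq_cfc hB S ▸ cfc_predicate _ B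

theorem spectralProj_mul_pow_mul_eq_zero {H : Matrix (Fin n) (Fin n) ℂ} {Δ : ℝ}
    (hrange : ∀ S₁ S₂ : Set ℝ, (∀ s ∈ S₁, ∀ t ∈ S₂, Δ ≤ |s - t|) →
      spectralProj hB S₁ * H * spectralProj hB S₂ = 0)
    (k : ℕ) {S₁ S₂ : Set ℝ} {c : ℝ} (hc : k * Δ < c)
    (hsep : ∀ s ∈ S₁, ∀ t ∈ S₂, c ≤ |s - t|) :
    spectralProj hB S₁ * H ^ k * spectralProj hB S₂ = 0 := by
  induction k generalizing S₂ c with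
  | zero =>
    have hc₀ : 0 < c := by simpa using hc
    have hdisj : S₁ ∩ S₂ = ∅ := Set.eq_empty_of_forall_notMem fun x ⟨hx₁, hx₂⟩ => by
      simpa using hc₀.trans_le (hsep x hx₁ x hx₂)
    rw [pow_zero, mul_one, spectralProj_mul_spectralProj, hdisj, spectralProj_empty]
  | succ k ih =>
    set T : Set ℝ := {x | ∀ s ∈ S₁, c - Δ ≤ |s - x|}
    have hT : spectralProj hB S₁ * H ^ k * spectralProj hB T = 0 :=
      ih (by push_cast at hc; linarith) fun s hs x hx => hx s hs
    have hTc : spectralProj hB Tᶜ * H * spectralProj hB S₂ = 0 := by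
      refine hrange _ _ fun x hx y hy => ?_
      obtain ⟨s, hs, hsx⟩ : ∃ s ∈ S₁, |s - x| + Δ < c := by simpa [T] using hx
      linarith [hsep s hs y hy, abs_sub_le s x y]
    calc spectralProj hB S₁ * H ^ (k + 1) * spectralProj hB S₂
        = spectralProj hB S₁ * H ^ k * (spectralProj hB T + spectralProj hB Tᶜ) * H *
            spectralProj hB S₂ := by
          rw [spectralProj_add_spectralProj_compl, mul_one, pow_succ, mul_assoc _ (H ^ k)]
      _ = spectralProj hB S₁ * H ^ k * spectralProj hB T * H * spectralProj hB S₂ +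
            spectralProj hB S₁ * H ^ k * (spectralProj hB Tᶜ * H * spectralProj hB S₂) := by
          noncomm_ring
      _ = 0 := by rw [hT, hTc]; simp

end SpectralProjection

theorem stmt_15_general {n : ℕ} (H B : Matrix (Fin n) (Fin n) ℂ)
    (hB : B.IsHermitian)
    (hHnorm : opNorm H ≤ 1) (Δ : ℝ) (hΔ : 0 < Δ)
    (hrange : ∀ S₁ S₂ : Set ℝ, (∀ s ∈ S₁, ∀ t ∈ S₂, Δ ≤ |s - t|) →
      spectralProj hB S₁ * H * spectralProj hB S₂ = 0)
    (S₁ S₂ : Set ℝ) (d : ℝ) (hd : 0 < d)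
    (hsep : ∀ s ∈ S₁, ∀ t ∈ S₂, d ≤ |s - t|)
    (t : ℝ) (ht : |t| ≤ d / (Real.exp 2 * Δ)) :
    opNorm (spectralProj hB S₁ * NormedSpace.exp ((Complex.I * t) • H) *
        spectralProj hB S₂) ≤ Real.exp (-(d / Δ)) := by
  set m := ⌈d / Δ⌉₊
  have hm : m ≠ 0 := (Nat.ceil_pos.mpr (div_pos hd hΔ)).ne'
  have hvanish : ∀ k < m,
      spectralProj hB S₁ * ((Complex.I * t) • H) ^ k * spectralProj hB S₂ = 0 := by
    intro k hk
    have hkΔ : k * Δ < d := (lt_div_iff₀ hΔ).mp (Nat.lt_ceil.mp hk)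
    rw [smul_pow, mul_smul_comm, smul_mul_assoc,
      spectralProj_mul_pow_mul_eq_zero hB hrange k hkΔ hsep, smul_zero]
  have hx : ‖(Complex.I * t) • H‖ ≤ |t| := by
    have hH : ‖H‖ ≤ 1 := hHnorm
    rw [norm_smul]
    simpa using mul_le_of_le_one_right (abs_nonneg t) hH
  have htm : |t| * exp 2 ≤ m := by
    calc |t| * exp 2 ≤ d / Δ := by
          rw [le_div_iff₀ hΔ, mul_assoc]
          rwa [le_div_iff₀ (by positivity)] at ht
      _ ≤ m := Nat.le_ceil _
  rw [opNorm, ← Matrix.cstar_norm_def]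
  calc ‖spectralProj hB S₁ * NormedSpace.exp ((Complex.I * t) • H) * spectralProj hB S₂‖
      ≤ ‖spectralProj hB S₁‖ * ‖spectralProj hB S₂‖ * ∑' k, |t| ^ (k + m) / (k + m)! :=
        norm_mul_exp_mul_le_of_mul_pow_mul_eq_zero ℂ hx hvanish
    _ ≤ 1 * 1 * exp (-m) := by
        gcongr
        · exact (isStarProjection_spectralProj hB S₁).norm_le
        · exact (isStarProjection_spectralProj hB S₂).norm_le
        · exact tsum_pow_add_div_factorial_le_exp_neg hm (abs_nonneg t) htm
    _ ≤ exp (-(d / Δ)) := by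
        rw [one_mul, one_mul]
        exact exp_le_exp.mpr (neg_le_neg (Nat.le_ceil _))

/-- **A Lieb–Robinson-type bound.**
Let `H, B` be Hermitian, `‖H‖ ≤ 1`, and suppose `E_{S₁}(B) H E_{S₂}(B) = 0` whenever
`dist(S₁, S₂) ≥ Δ > 0`. Fix sets `S₁, S₂` at distance at least `d > 0`. Then for every
real `t` with `|t| ≤ d/(e² Δ)`, `‖E_{S₁}(B) e^{itH} E_{S₂}(B)‖ ≤ e^{-d/Δ}`. -/
theorem stmt_15 {n : ℕ} (H B : Matrix (Fin n) (Fin n) ℂ)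
    (hH : H.IsHermitian) (hB : B.IsHermitian)
    (hHnorm : opNorm H ≤ 1) (Δ : ℝ) (hΔ : 0 < Δ)
    (hrange : ∀ S₁ S₂ : Set ℝ, (∀ s ∈ S₁, ∀ t ∈ S₂, Δ ≤ |s - t|) →
      spectralProj hB S₁ * H * spectralProj hB S₂ = 0)
    (S₁ S₂ : Set ℝ) (d : ℝ) (hd : 0 < d)
    (hsep : ∀ s ∈ S₁, ∀ t ∈ S₂, d ≤ |s - t|)
    (t : ℝ) (ht : |t| ≤ d / (Real.exp 2 * Δ)) :
    opNorm (spectralProj hB S₁ * NormedSpace.exp ((Complex.I * t) • H) *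
        spectralProj hB S₂) ≤ Real.exp (-(d / Δ)) :=
  stmt_15_general H B hB hHnorm Δ hΔ hrange S₁ S₂ d hd hsep t ht
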